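/- Let K be a finite-dimensional Hilbert space, K a self-adjoint operator on it, h a finite-dimensional Hilbert space, Y self-adjoint on h, and ν ∈ B(K, K ⊗ h) satisfying the intertwining relation ν K = (K ⊗ 1 + 1 ⊗ Y) ν. Then M(A) := −½{ν*ν, A} + ν*(A ⊗ 1)ν generates a K-invariant purely dissipative Markov completely positive semigroup on B(K); in particular ν*ν commutes with K and M(e^{itK} A e^{-itK}) = e^{itK} M(A) e^{-itK} for all t. -/

import Mathlib

open Matrix ComplexConjugate MeasureTheory
open scoped Kronecker ComplexOrder

noncomputable section

/-- Ampliation `Φ ⊗ id_k` of a superoperator, acting on `B(K ⊗ ℂᵏ)`. -/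
def amp {n m k : Type*} [Fintype n] [Fintype m] [Fintype k]
    (Φ : Matrix n n ℂ → Matrix m m ℂ) :
    Matrix (n × k) (n × k) ℂ → Matrix (m × k) (m × k) ℂ :=
  fun M => Matrix.of fun p q => Φ (Matrix.of fun a b => M (a, p.2) (b, q.2)) p.1 q.1

/-- A map between matrix algebras is positive if it preserves positive semidefiniteness. -/
def IsPosMap {n m : Type*} [Fintype n] [Fintype m]
    (Φ : Matrix n n ℂ → Matrix m m ℂ) : Prop :=
  ∀ A : Matrix n n ℂ, A.PosSemidef → (Φ A).PosSemidef

/-- Complete positivity: all ampliations `Φ ⊗ id_k` are positive. -/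
def IsCP {n m : Type*} [Fintype n] [Fintype m]
    (Φ : Matrix n n ℂ → Matrix m m ℂ) : Prop :=
  ∀ k : ℕ, IsPosMap (amp (k := Fin k) Φ)

/-- Action of a supermatrix (matrix on index `n × n`) as a linear map on `B(ℂⁿ)`. -/
def supAct {n : Type*} [Fintype n]
    (L : Matrix (n × n) (n × n) ℂ) (A : Matrix n n ℂ) : Matrix n n ℂ :=
  Matrix.of fun i j => ∑ p : n × n, L (i, j) p * A p.1 p.2

/-- The standard (antilinear in the first slot) inner product on `ι → ℂ`. -/
def cinner {ι : Type*} [Fintype ι] (v w : ι → ℂ) : ℂ := ∑ i, conj (v i) * w i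

/-- Elementary tensor of two vectors. -/
def tvec {n d : Type*} (φ : n → ℂ) (w : d → ℂ) : n × d → ℂ := fun p => φ p.1 * w p.2

/-- Contraction `(φ| ⊗ 1 : K ⊗ h → h`. -/
def contrL {n d : Type*} [Fintype n] (φ : n → ℂ) (x : n × d → ℂ) : d → ℂ :=
  fun a => ∑ i, conj (φ i) * x (i, a)

/-- Partial trace over the second tensor factor. -/
def ptr {n d : Type*} [Fintype d] (M : Matrix (n × d) (n × d) ℂ) : Matrix n n ℂ :=
  Matrix.of fun i j => ∑ a, M (i, a) (j, a)

/-!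
Write `G = -½ ν†ν`, so that `L` acts as `A ↦ G A + A G† + ν†(A ⊗ 1)ν`. The supermatrix
`1 + sL + s² G ⊗ Ḡ` acts as `A ↦ (1 + sG) A (1 + sG)† + s ν†(A ⊗ 1)ν`, which is completely
positive for `s ≥ 0`; by Chernoff's product formula its `m`-th power at `s = t/m` converges to
`exp (tL)`, and complete positivity survives the limit. The semigroup is unital because `L 1 = 0`.
Exponentiating the intertwining relation gives `(e^{cK} ⊗ e^{cY}) ν = ν e^{cK}` and, from its
adjoint, `e^{cK} ν† = ν† (e^{cK} ⊗ e^{cY})`; in `ν†((U A U⁻¹) ⊗ 1)ν` the factors `e^{±cY}` cancel,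
so conjugation by `e^{itK}` commutes with `L`.
-/

open Filter Topology NormedSpace

section Chernoff

variable {𝔸 : Type*} [NormedRing 𝔸]

theorem norm_pow_sub_pow_le [NormOneClass 𝔸] (a b : 𝔸) {D : ℝ} (ha : ‖a‖ ≤ D) (hb : ‖b‖ ≤ D)
    (m : ℕ) : ‖a ^ m - b ^ m‖ ≤ m * D ^ (m - 1) * ‖a - b‖ := by
  induction m with
  | zero => simp
  | succ m ih =>
    have hD : 0 ≤ D := (norm_nonneg a).trans ha
    have hDm : D * (m * D ^ (m - 1)) = m * D ^ m := by
      rcases m with _ | m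
      · simp
      · simp only [Nat.add_sub_cancel, pow_succ]; ring
    calc ‖a ^ (m + 1) - b ^ (m + 1)‖ = ‖a * (a ^ m - b ^ m) + (a - b) * b ^ m‖ := by
          rw [pow_succ', pow_succ']; noncomm_ring
      _ ≤ ‖a‖ * ‖a ^ m - b ^ m‖ + ‖a - b‖ * ‖b‖ ^ m :=
          (norm_add_le _ _).trans (add_le_add (norm_mul_le _ _)
            ((norm_mul_le _ _).trans (by gcongr; exact norm_pow_le b m)))
      _ ≤ D * (m * D ^ (m - 1) * ‖a - b‖) + ‖a - b‖ * D ^ m := by gcongr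
      _ = (m + 1 : ℕ) * D ^ (m + 1 - 1) * ‖a - b‖ := by
          rw [Nat.add_sub_cancel, ← mul_assoc, hDm]; push_cast; ring

variable [NormedAlgebra ℝ 𝔸]

theorem norm_le_one_add_div_of_norm_nsmul_sub_one_le [NormOneClass 𝔸] {a : 𝔸} {m : ℕ}
    (hm : m ≠ 0) {c : ℝ} (h : ‖m • (a - 1)‖ ≤ c) : ‖a‖ ≤ 1 + c / m := by
  have hm' : (0 : ℝ) < m := by positivity
  rw [RCLike.norm_nsmul ℝ, nsmul_eq_mul] at h
  calc ‖a‖ = ‖1 + (a - 1)‖ := by rw [add_sub_cancel]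
    _ ≤ 1 + ‖a - 1‖ := (norm_add_le _ _).trans_eq (by rw [norm_one])
    _ ≤ 1 + c / m := by gcongr; rwa [le_div_iff₀' hm']

variable [CompleteSpace 𝔸]

theorem tendsto_nsmul_exp_inv_smul_sub_one (X : 𝔸) :
    Tendsto (fun m : ℕ => m • (exp ((m : ℝ)⁻¹ • X) - 1)) atTop (𝓝 X) := by
  have hderiv := hasDerivAt_exp_smul_const (𝕂 := ℝ) X 0
  rw [zero_smul, exp_zero, one_mul, hasDerivAt_iff_tendsto_slope_zero] at hderiv
  have hinv : Tendsto (fun m : ℕ => (m : ℝ)⁻¹) atTop (𝓝[≠] 0) :=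
    tendsto_nhdsWithin_iff.mpr ⟨tendsto_inv_atTop_zero.comp tendsto_natCast_atTop_atTop,
      (eventually_ne_atTop 0).mono fun m hm => by simpa using hm⟩
  refine (hderiv.comp hinv).congr' ((eventually_ne_atTop 0).mono fun m hm => ?_)
  simp [Nat.cast_smul_eq_nsmul]

theorem tendsto_pow_exp_of_tendsto_nsmul_sub_one [NormOneClass 𝔸] {f : ℕ → 𝔸} {X : 𝔸}
    (hf : Tendsto (fun m : ℕ => m • (f m - 1)) atTop (𝓝 X)) :
    Tendsto (fun m => f m ^ m) atTop (𝓝 (exp X)) := by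
  let _ : NormedAlgebra ℚ 𝔸 := NormedAlgebra.restrictScalars ℚ ℝ 𝔸
  set b : ℕ → 𝔸 := fun m => exp ((m : ℝ)⁻¹ • X)
  have hb := tendsto_nsmul_exp_inv_smul_sub_one X
  have hbpow : ∀ m : ℕ, m ≠ 0 → b m ^ m = exp X := fun m hm => by
    rw [← NormedSpace.exp_nsmul, ← Nat.cast_smul_eq_nsmul ℝ, smul_smul,
      mul_inv_cancel₀ (by positivity), one_smul]
  have hdiff : Tendsto (fun m : ℕ => m • (f m - b m)) atTop (𝓝 0) := by
    simpa only [← smul_sub, sub_sub_sub_cancel_right, sub_self] using hf.sub hb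
  set c := ‖X‖ + 1
  have hbound : ∀ g : ℕ → 𝔸, Tendsto (fun m : ℕ => m • (g m - 1)) atTop (𝓝 X) →
      ∀ᶠ m in atTop, ‖g m‖ ≤ 1 + c / m := fun g hg => by
    filter_upwards [hg.norm.eventually (gt_mem_nhds (lt_add_one ‖X‖)), eventually_ne_atTop 0]
      with m hm hm0
    exact norm_le_one_add_div_of_norm_nsmul_sub_one_le hm0 hm.le
  refine tendsto_iff_norm_sub_tendsto_zero.mpr (squeeze_zero' (Eventually.of_forall fun _ =>
    norm_nonneg _) (g := fun m : ℕ => Real.exp c * ‖m • (f m - b m)‖) ?_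
    (by simpa only [norm_zero, mul_zero] using hdiff.norm.const_mul (Real.exp c)))
  filter_upwards [hbound f hf, hbound b hb, eventually_ne_atTop 0] with m hfm hbm hm
  have hc : 0 ≤ c := by positivity
  have hD : (1 + c / m) ^ (m - 1) ≤ Real.exp c := calc
    (1 + c / m) ^ (m - 1) ≤ (1 + c / m) ^ m :=
      pow_le_pow_right₀ (le_add_of_nonneg_right (by positivity)) (Nat.sub_le m 1)
    _ ≤ Real.exp c := by
      simpa [neg_div, sub_neg_eq_add] using
        Real.one_sub_div_pow_le_exp_neg (n := m) (t := -c) (by linarith [m.cast_nonneg (α := ℝ)])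
  calc ‖f m ^ m - exp X‖ = ‖f m ^ m - b m ^ m‖ := by rw [hbpow m hm]
    _ ≤ m * (1 + c / m) ^ (m - 1) * ‖f m - b m‖ := norm_pow_sub_pow_le _ _ hfm hbm m
    _ ≤ Real.exp c * ‖m • (f m - b m)‖ := by
      rw [RCLike.norm_nsmul ℝ, nsmul_eq_mul, mul_right_comm, mul_comm (Real.exp c)]
      gcongr

end Chernoff

section CompletelyPositive

variable {n m : Type*} [Fintype n] [Fintype m]

theorem isClosed_setOf_posSemidef : IsClosed {A : Matrix n n ℂ | A.PosSemidef} := by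
  simp only [posSemidef_iff_dotProduct_mulVec, Set.ofPred_and, Set.ofPred_forall]
  refine (isClosed_eq continuous_id.matrix_conjTranspose continuous_id).inter
    (isClosed_iInter fun x => isClosed_le continuous_const ?_)
  exact continuous_const.dotProduct (continuous_id.matrix_mulVec continuous_const)

theorem isCP_id : IsCP (id : Matrix n n ℂ → Matrix n n ℂ) := fun _ _ hM => hM

theorem IsCP.comp {l : Type*} [Fintype l] {Φ : Matrix m m ℂ → Matrix l l ℂ}
    {Ψ : Matrix n n ℂ → Matrix m m ℂ} (hΦ : IsCP Φ) (hΨ : IsCP Ψ) : IsCP (Φ ∘ Ψ) :=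
  fun k _ hM => hΦ k _ (hΨ k _ hM)

theorem IsCP.add {Φ Ψ : Matrix n n ℂ → Matrix m m ℂ} (hΦ : IsCP Φ) (hΨ : IsCP Ψ) :
    IsCP (Φ + Ψ) :=
  fun k _ hM => (hΦ k _ hM).add (hΨ k _ hM)

theorem IsCP.smul {Φ : Matrix n n ℂ → Matrix m m ℂ} (hΦ : IsCP Φ) {c : ℝ} (hc : 0 ≤ c) :
    IsCP ((c : ℂ) • Φ) :=
  fun k _ hM => (hΦ k _ hM).smul (by exact_mod_cast hc)

theorem isCP_of_tendsto {ι : Type*} {l : Filter ι} [l.NeBot]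
    {Φ : ι → Matrix n n ℂ → Matrix m m ℂ} {Ψ : Matrix n n ℂ → Matrix m m ℂ}
    (hlim : ∀ A, Tendsto (fun i => Φ i A) l (𝓝 (Ψ A))) (hΦ : ∀ᶠ i in l, IsCP (Φ i)) :
    IsCP Ψ := fun k M hM =>
  isClosed_setOf_posSemidef.mem_of_tendsto
    (tendsto_pi_nhds.2 fun p => tendsto_pi_nhds.2 fun q =>
      ((continuous_apply q.1).comp (continuous_apply p.1)).continuousAt.tendsto.comp (hlim _))
    (hΦ.mono fun _ hi => hi k M hM)

theorem amp_conj (V : Matrix m n ℂ) (k : Type*) [Fintype k] [DecidableEq k]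
    (M : Matrix (n × k) (n × k) ℂ) :
    amp (fun A => V * A * Vᴴ) M
      = (V ⊗ₖ (1 : Matrix k k ℂ)) * M * (V ⊗ₖ (1 : Matrix k k ℂ))ᴴ := by
  ext ⟨i, c⟩ ⟨j, e⟩
  simp [amp, mul_apply, Fintype.sum_prod_type, one_apply, conjTranspose_apply, Finset.sum_mul,
    apply_ite (starRingEnd ℂ), mul_ite]

theorem isCP_conj (V : Matrix m n ℂ) : IsCP fun A : Matrix n n ℂ => V * A * Vᴴ :=
  fun k M hM => by
    rw [amp_conj]
    exact hM.mul_mul_conjTranspose_same _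

theorem amp_kronecker_one (D k : Type*) [Fintype D] [DecidableEq D] [Fintype k]
    (M : Matrix (n × k) (n × k) ℂ) :
    amp (fun A => A ⊗ₖ (1 : Matrix D D ℂ)) M
      = (M ⊗ₖ (1 : Matrix D D ℂ)).submatrix (fun x => ((x.1.1, x.2), x.1.2))
          (fun x => ((x.1.1, x.2), x.1.2)) := by
  ext ⟨⟨i, a⟩, c⟩ ⟨⟨j, b⟩, e⟩
  simp [amp]

theorem isCP_kronecker_one (D : Type*) [Fintype D] [DecidableEq D] :
    IsCP fun A : Matrix n n ℂ => A ⊗ₖ (1 : Matrix D D ℂ) :=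
  fun k M hM => by
    rw [amp_kronecker_one]
    exact (hM.kronecker PosSemidef.one).submatrix _

end CompletelyPositive

section MatrixExp

variable {𝕂 : Type*} [RCLike 𝕂] {a b : Type*} [Fintype a] [DecidableEq a] [Fintype b]
  [DecidableEq b]

theorem Matrix.exp_mul_of_mul_eq {X : Matrix a a 𝕂} {V : Matrix a b 𝕂} {H : Matrix b b 𝕂}
    (h : X * V = V * H) : exp X * V = V * exp H := by
  have hpow : ∀ m : ℕ, X ^ m * V = V * H ^ m := fun m => by
    induction m with
    | zero => simp
    | succ m ih =>
      rw [pow_succ, Matrix.mul_assoc, h, ← Matrix.mul_assoc, ih, Matrix.mul_assoc, ← pow_succ]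
  open scoped Norms.Operator in
  have hX := (exp_series_hasSum_exp' (𝕂 := 𝕂) X).map (mulRightLinearMap a 𝕂 V)
    (continuous_id.matrix_mul continuous_const)
  open scoped Norms.Operator in
  have hH := (exp_series_hasSum_exp' (𝕂 := 𝕂) H).map (mulLeftLinearMap b 𝕂 V)
    (continuous_const.matrix_mul continuous_id)
  refine hX.unique ?_
  convert hH using 1
  · ext1 m
    simp [hpow]
  · rfl

theorem Matrix.exp_kronecker_one (X : Matrix a a 𝕂) :
    exp (X ⊗ₖ (1 : Matrix b b 𝕂)) = exp X ⊗ₖ (1 : Matrix b b 𝕂) := by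
  let f : Matrix a a 𝕂 →+* Matrix (a × b) (a × b) 𝕂 :=
    { toFun := (· ⊗ₖ (1 : Matrix b b 𝕂))
      map_one' := one_kronecker_one
      map_mul' := fun X Y => by simp [← mul_kronecker_mul]
      map_zero' := zero_kronecker _
      map_add' := fun X Y => add_kronecker X Y _ }
  have hf : Continuous f := continuous_pi fun i => continuous_pi fun j =>
    ((continuous_apply j.1).comp (continuous_apply i.1)).mul continuous_const
  open scoped Norms.Operator in
  exact (map_exp f hf X).symm

theorem Matrix.exp_one_kronecker (Y : Matrix b b 𝕂) :
    exp ((1 : Matrix a a 𝕂) ⊗ₖ Y) = (1 : Matrix a a 𝕂) ⊗ₖ exp Y := by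
  let f : Matrix b b 𝕂 →+* Matrix (a × b) (a × b) 𝕂 :=
    { toFun := ((1 : Matrix a a 𝕂) ⊗ₖ ·)
      map_one' := one_kronecker_one
      map_mul' := fun X Y => by simp [← mul_kronecker_mul]
      map_zero' := kronecker_zero _
      map_add' := fun X Y => kronecker_add _ X Y }
  have hf : Continuous f := continuous_pi fun i => continuous_pi fun j =>
    continuous_const.mul ((continuous_apply j.2).comp (continuous_apply i.2))
  open scoped Norms.Operator in
  exact (map_exp f hf Y).symm

theorem Matrix.exp_kronecker_one_add_one_kronecker (X : Matrix a a 𝕂) (Y : Matrix b b 𝕂) :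
    exp (X ⊗ₖ (1 : Matrix b b 𝕂) + (1 : Matrix a a 𝕂) ⊗ₖ Y) = exp X ⊗ₖ exp Y := by
  have hcomm : Commute (X ⊗ₖ (1 : Matrix b b 𝕂)) ((1 : Matrix a a 𝕂) ⊗ₖ Y) := by
    simp [Commute, SemiconjBy, ← mul_kronecker_mul]
  rw [Matrix.exp_add_of_commute _ _ hcomm, exp_kronecker_one, exp_one_kronecker,
    ← mul_kronecker_mul, Matrix.mul_one, Matrix.one_mul]

end MatrixExp

section SupAct

variable {N : Type*} [Fintype N]

theorem supAct_add (L M : Matrix (N × N) (N × N) ℂ) (A : Matrix N N ℂ) :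
    supAct (L + M) A = supAct L A + supAct M A := by
  ext i j
  simp [supAct, add_mul, Finset.sum_add_distrib]

theorem supAct_smul (c : ℂ) (L : Matrix (N × N) (N × N) ℂ) (A : Matrix N N ℂ) :
    supAct (c • L) A = c • supAct L A := by
  ext i j
  simp [supAct, Finset.mul_sum, mul_assoc]

theorem supAct_mul (L M : Matrix (N × N) (N × N) ℂ) (A : Matrix N N ℂ) :
    supAct (L * M) A = supAct L (supAct M A) := by
  ext i j
  simp only [supAct, of_apply, mul_apply, Finset.sum_mul, Finset.mul_sum, mul_assoc]
  exact Finset.sum_comm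

theorem supAct_one [DecidableEq N] (A : Matrix N N ℂ) : supAct 1 A = A := by
  ext i j
  simp [supAct, one_apply]

theorem supAct_kronecker (B C A : Matrix N N ℂ) : supAct (B ⊗ₖ Cᵀ) A = B * A * C := by
  ext i j
  simp only [supAct, of_apply, mul_apply, kroneckerMap_apply, transpose_apply,
    Fintype.sum_prod_type, Finset.sum_mul]
  rw [Finset.sum_comm]
  exact Finset.sum_congr rfl fun _ _ => Finset.sum_congr rfl fun _ _ => by ring

theorem continuous_supAct_left (A : Matrix N N ℂ) :
    Continuous fun L : Matrix (N × N) (N × N) ℂ => supAct L A :=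
  continuous_pi fun _ => continuous_pi fun _ => continuous_finsetSum _ fun _ _ => by fun_prop

theorem isCP_supAct_pow [DecidableEq N] {P : Matrix (N × N) (N × N) ℂ} (hP : IsCP (supAct P))
    (m : ℕ) : IsCP (supAct (P ^ m)) := by
  induction m with
  | zero =>
    rw [pow_zero, show supAct (1 : Matrix (N × N) (N × N) ℂ) = id from funext supAct_one]
    exact isCP_id
  | succ m ih =>
    rw [pow_succ, show supAct (P ^ m * P) = supAct (P ^ m) ∘ supAct P from
      funext (supAct_mul _ P)]
    exact ih.comp hP

theorem supAct_exp_of_supAct_eq_zero [DecidableEq N] {X : Matrix (N × N) (N × N) ℂ}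
    {A : Matrix N N ℂ} (hX : supAct X A = 0) : supAct (exp X) A = A := by
  set v : N × N → ℂ := fun p => A p.1 p.2
  have hv : X * replicateCol Unit v = replicateCol Unit v * (0 : Matrix Unit Unit ℂ) := by
    rw [Matrix.mul_zero, ← replicateCol_mulVec]
    ext ⟨i, j⟩ _
    exact congrFun (congrFun hX i) j
  have hexp := exp_mul_of_mul_eq hv
  rw [exp_zero, Matrix.mul_one, ← replicateCol_mulVec] at hexp
  ext i j
  exact congrFun (congrFun hexp (i, j)) ()

end SupAct

section Generator

variable {N : Type*} [DecidableEq N]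

def lindbladStep (L : Matrix (N × N) (N × N) ℂ) (G : Matrix N N ℂ) (s : ℝ) :
    Matrix (N × N) (N × N) ℂ :=
  1 + (s : ℂ) • L + ((s ^ 2 : ℝ) : ℂ) • (G ⊗ₖ Gᴴᵀ)

variable [Fintype N] {L : Matrix (N × N) (N × N) ℂ} {G : Matrix N N ℂ}
  {Φ : Matrix N N ℂ → Matrix N N ℂ}

theorem supAct_lindbladStep (hL : ∀ A, supAct L A = G * A + A * Gᴴ + Φ A) (s : ℝ)
    (A : Matrix N N ℂ) :
    supAct (lindbladStep L G s) A
      = (1 + (s : ℂ) • G) * A * (1 + (s : ℂ) • G)ᴴ + (s : ℂ) • Φ A := by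
  rw [lindbladStep, supAct_add, supAct_add, supAct_one, supAct_smul, supAct_smul, hL,
    supAct_kronecker]
  simp only [conjTranspose_add, conjTranspose_one, conjTranspose_smul, Complex.star_def,
    Complex.conj_ofReal, Matrix.add_mul, Matrix.mul_add, Matrix.smul_mul, Matrix.mul_smul,
    Matrix.one_mul, Matrix.mul_one, smul_add, smul_smul, Complex.ofReal_pow]
  module

theorem isCP_supAct_lindbladStep (hL : ∀ A, supAct L A = G * A + A * Gᴴ + Φ A) (hΦ : IsCP Φ)
    {s : ℝ} (hs : 0 ≤ s) : IsCP (supAct (lindbladStep L G s)) := by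
  rw [funext (supAct_lindbladStep hL s)]
  exact (isCP_conj _).add (hΦ.smul hs)

omit [Fintype N] in
theorem tendsto_nsmul_lindbladStep_sub_one (L : Matrix (N × N) (N × N) ℂ) (G : Matrix N N ℂ)
    (t : ℝ) :
    Tendsto (fun m : ℕ => m • (lindbladStep L G (t / m) - 1)) atTop (𝓝 ((t : ℂ) • L)) := by
  have h0 : Tendsto (fun m : ℕ => ((t ^ 2 / m : ℝ) : ℂ)) atTop (𝓝 0) := by
    rw [← Complex.ofReal_zero]
    exact (Complex.continuous_ofReal.tendsto 0).comp (tendsto_const_div_atTop_nhds_zero_nat _)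
  have hlim := (tendsto_const_nhds (x := (t : ℂ) • L)).add (h0.smul_const (G ⊗ₖ Gᴴᵀ))
  rw [zero_smul, add_zero] at hlim
  refine hlim.congr' ((eventually_ne_atTop 0).mono fun m hm => ?_)
  have hm' : (m : ℂ) ≠ 0 := Nat.cast_ne_zero.mpr hm
  dsimp only
  rw [lindbladStep, add_assoc, add_sub_cancel_left, ← Nat.cast_smul_eq_nsmul ℂ, smul_add,
    smul_smul, smul_smul]
  congr 2 <;> push_cast <;> field_simp

theorem isCP_supAct_exp_of_generator (hL : ∀ A, supAct L A = G * A + A * Gᴴ + Φ A)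
    (hΦ : IsCP Φ) {t : ℝ} (ht : 0 ≤ t) : IsCP (supAct (exp ((t : ℂ) • L))) := by
  -- the operator norm has `‖1‖ = 1` only on a nonempty index type
  obtain hN | hN := isEmpty_or_nonempty N
  · intro k M _
    rw [Subsingleton.elim (amp _ M) 0]
    exact .zero
  open scoped Norms.Operator in
  have hlim := tendsto_pow_exp_of_tendsto_nsmul_sub_one (tendsto_nsmul_lindbladStep_sub_one L G t)
  refine isCP_of_tendsto (fun A => ((continuous_supAct_left A).tendsto _).comp hlim)
    (Eventually.of_forall fun m => isCP_supAct_pow ?_ m)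
  exact isCP_supAct_lindbladStep hL hΦ (by positivity)

end Generator

section Lindblad

variable {N D : Type*} [Fintype N] [Fintype D] [DecidableEq D]

def lindbladian (W : Matrix (N × D) N ℂ) (A : Matrix N N ℂ) : Matrix N N ℂ :=
  -(1 / 2 : ℂ) • (Wᴴ * W * A + A * (Wᴴ * W)) + Wᴴ * (A ⊗ₖ (1 : Matrix D D ℂ)) * W

theorem lindbladian_eq_mul_add_mul_conjTranspose_add (W : Matrix (N × D) N ℂ)
    (A : Matrix N N ℂ) :
    lindbladian W A = (-(1 / 2 : ℂ) • (Wᴴ * W)) * A + A * (-(1 / 2 : ℂ) • (Wᴴ * W))ᴴ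
      + Wᴴ * (A ⊗ₖ (1 : Matrix D D ℂ)) * W := by
  simp only [lindbladian, conjTranspose_smul, conjTranspose_mul, conjTranspose_conjTranspose,
    smul_add, Matrix.smul_mul, Matrix.mul_smul]
  congr 3
  simp

theorem lindbladian_one [DecidableEq N] (W : Matrix (N × D) N ℂ) : lindbladian W 1 = 0 := by
  simp only [lindbladian, one_kronecker_one, Matrix.mul_one, Matrix.one_mul]
  module

theorem isCP_conjTranspose_mul_kronecker_one_mul (W : Matrix (N × D) N ℂ) :
    IsCP fun A : Matrix N N ℂ => Wᴴ * (A ⊗ₖ (1 : Matrix D D ℂ)) * W := by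
  have h := (isCP_conj Wᴴ).comp (isCP_kronecker_one (n := N) D)
  rwa [conjTranspose_conjTranspose] at h

theorem isCP_supAct_exp_of_lindbladian [DecidableEq N] {L : Matrix (N × N) (N × N) ℂ}
    {W : Matrix (N × D) N ℂ} (hL : ∀ A, supAct L A = lindbladian W A) {t : ℝ} (ht : 0 ≤ t) :
    IsCP (supAct (exp ((t : ℂ) • L))) :=
  isCP_supAct_exp_of_generator
    (fun A => (hL A).trans (lindbladian_eq_mul_add_mul_conjTranspose_add W A))
    (isCP_conjTranspose_mul_kronecker_one_mul W) ht

theorem lindbladian_conj {W : Matrix (N × D) N ℂ} {U U' : Matrix N N ℂ} {V V' : Matrix D D ℂ}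
    (hVV' : V * V' = 1) (hU : (U ⊗ₖ V) * W = W * U) (hUadj : U * Wᴴ = Wᴴ * (U ⊗ₖ V))
    (hU' : (U' ⊗ₖ V') * W = W * U') (hU'adj : U' * Wᴴ = Wᴴ * (U' ⊗ₖ V'))
    (A : Matrix N N ℂ) : lindbladian W (U * A * U') = U * lindbladian W A * U' := by
  have hA : (U * A * U') ⊗ₖ (1 : Matrix D D ℂ) = (U ⊗ₖ V) * (A ⊗ₖ 1) * (U' ⊗ₖ V') := by
    rw [← mul_kronecker_mul, ← mul_kronecker_mul, Matrix.mul_one, hVV']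
  have hcomm : Wᴴ * W * U = U * (Wᴴ * W) := by
    rw [Matrix.mul_assoc, ← hU, ← Matrix.mul_assoc, ← hUadj, Matrix.mul_assoc]
  have hcomm' : Wᴴ * W * U' = U' * (Wᴴ * W) := by
    rw [Matrix.mul_assoc, ← hU', ← Matrix.mul_assoc, ← hU'adj, Matrix.mul_assoc]
  have hdiss : Wᴴ * ((U * A * U') ⊗ₖ (1 : Matrix D D ℂ)) * W
      = U * (Wᴴ * (A ⊗ₖ (1 : Matrix D D ℂ)) * W) * U' := by
    rw [hA]
    simp only [Matrix.mul_assoc]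
    rw [hU', ← Matrix.mul_assoc Wᴴ, ← hUadj]
    simp only [Matrix.mul_assoc]
  simp only [lindbladian, hdiss, Matrix.mul_add, Matrix.add_mul, Matrix.mul_smul,
    Matrix.smul_mul, smul_add]
  simp only [← Matrix.mul_assoc, hcomm]
  simp only [Matrix.mul_assoc, ← hcomm']

end Lindblad

/-- If `ν K = (K⊗1 + 1⊗Y)ν` then `M(A) = −½{ν*ν, A} + ν*(A⊗1)ν` generates a `K`-invariant
Markov completely positive semigroup; in particular `ν*ν` commutes with `K`. -/
theorem lindblad_intertwining_kinvariant {n d : ℕ}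
    (K : Matrix (Fin n) (Fin n) ℂ) (hK : K.IsHermitian)
    (Y : Matrix (Fin d) (Fin d) ℂ) (hY : Y.IsHermitian)
    (ν : Matrix (Fin n × Fin d) (Fin n) ℂ)
    (hint : ν * K = (K ⊗ₖ (1 : Matrix (Fin d) (Fin d) ℂ)
        + (1 : Matrix (Fin n) (Fin n) ℂ) ⊗ₖ Y) * ν)
    (L : Matrix (Fin n × Fin n) (Fin n × Fin n) ℂ)
    (hL : ∀ A : Matrix (Fin n) (Fin n) ℂ,
      supAct L A = -(1 / 2 : ℂ) • (νᴴ * ν * A + A * (νᴴ * ν))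
        + νᴴ * (A ⊗ₖ (1 : Matrix (Fin d) (Fin d) ℂ)) * ν) :
    (νᴴ * ν * K = K * (νᴴ * ν)) ∧
    (∀ t : ℝ, 0 ≤ t → IsCP (supAct (NormedSpace.exp ((t : ℂ) • L))) ∧
        supAct (NormedSpace.exp ((t : ℂ) • L)) 1 = 1) ∧
    (∀ (t : ℝ) (A : Matrix (Fin n) (Fin n) ℂ),
      supAct L (NormedSpace.exp ((Complex.I * (t : ℂ)) • K) * A *
          NormedSpace.exp ((-(Complex.I * (t : ℂ))) • K))
        = NormedSpace.exp ((Complex.I * (t : ℂ)) • K) * supAct L A *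
            NormedSpace.exp ((-(Complex.I * (t : ℂ))) • K)) := by
  have hL' : ∀ A, supAct L A = lindbladian ν A := hL
  set H := K ⊗ₖ (1 : Matrix (Fin d) (Fin d) ℂ) + (1 : Matrix (Fin n) (Fin n) ℂ) ⊗ₖ Y
  have hadj : νᴴ * H = K * νᴴ := by
    simpa [H, conjTranspose_kronecker, hK.eq, hY.eq] using congrArg conjTranspose hint.symm
  have hcomm : νᴴ * ν * K = K * (νᴴ * ν) := by
    rw [Matrix.mul_assoc, hint, ← Matrix.mul_assoc, hadj, Matrix.mul_assoc]
  have hexpH : ∀ c : ℂ, exp (c • H) = exp (c • K) ⊗ₖ exp (c • Y) := fun c => by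
    rw [smul_add, ← smul_kronecker, ← kronecker_smul, exp_kronecker_one_add_one_kronecker]
  have hν : ∀ c : ℂ, (exp (c • K) ⊗ₖ exp (c • Y)) * ν = ν * exp (c • K) := fun c => by
    rw [← hexpH]
    exact exp_mul_of_mul_eq (by rw [Matrix.smul_mul, Matrix.mul_smul, hint])
  have hνadj : ∀ c : ℂ, exp (c • K) * νᴴ = νᴴ * (exp (c • K) ⊗ₖ exp (c • Y)) := fun c => by
    rw [← hexpH]
    exact exp_mul_of_mul_eq (by rw [Matrix.smul_mul, Matrix.mul_smul, hadj])
  have hexpY : ∀ c : ℂ, exp (c • Y) * exp (-c • Y) = 1 := fun c => by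
    rw [← Matrix.exp_add_of_commute _ _ (((Commute.refl Y).smul_left c).smul_right (-c)),
      ← add_smul, add_neg_cancel, zero_smul, exp_zero]
  refine ⟨hcomm, fun t ht => ⟨isCP_supAct_exp_of_lindbladian hL' ht,
    supAct_exp_of_supAct_eq_zero ?_⟩, fun t A => ?_⟩
  · rw [supAct_smul, hL', lindbladian_one, smul_zero]
  · rw [hL', hL']
    exact lindbladian_conj (hexpY _) (hν _) (hνadj _) (hν _) (hνadj _) A
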